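/- arXiv:2009.01777 — 7 statements merged into one kernel-verified Lean document; each statement's English description precedes it below -/
import Mathlib

section
/- For every interaction i ∈ Int and every global trace ς ∈ Act*, if ς ∈ Accept(i) then ω(i, proj(ς)) = Pass. -/
/-- An action `l!m` (emission, `isEmission = true`) or `l?m` (reception),
occurring on lifeline `lf` (lifelines are `Fin n`) carrying message `msg : M`. -/
structure MAction (n : ℕ) (M : Type) where
  lf : Fin n
  isEmission : Bool
  msg : M

/-- Interaction terms. -/
inductive Interaction (n : ℕ) (M : Type) : Type where
  | empty : Interaction n M
  | act : MAction n M → Interaction n M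
  | strict : Interaction n M → Interaction n M → Interaction n M
  | seq : Interaction n M → Interaction n M → Interaction n M
  | alt : Interaction n M → Interaction n M → Interaction n M
  | par : Interaction n M → Interaction n M → Interaction n M
  | loopStrict : Interaction n M → Interaction n M
  | loopSeq : Interaction n M → Interaction n M
  | loopPar : Interaction n M → Interaction n M

namespace Interaction

variable {n : ℕ} {M : Type}

/-- `exp_ε` : does the interaction (statically) express the empty trace. -/
def expEps : Interaction n M → Bool
  | empty => true
  | act _ => false
  | strict i1 i2 => expEps i1 && expEps i2
  | seq i1 i2 => expEps i1 && expEps i2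
  | par i1 i2 => expEps i1 && expEps i2
  | alt i1 i2 => expEps i1 || expEps i2
  | loopStrict _ => true
  | loopSeq _ => true
  | loopPar _ => true

/-- `avoids i l` : the interaction may avoid expressing any action on lifeline `l`. -/
def avoids : Interaction n M → Fin n → Bool
  | empty, _ => true
  | act a, l => decide (a.lf ≠ l)
  | strict i1 i2, l => avoids i1 l && avoids i2 l
  | seq i1 i2, l => avoids i1 l && avoids i2 l
  | par i1 i2, l => avoids i1 l && avoids i2 l
  | alt i1 i2, l => avoids i1 l || avoids i2 l
  | loopStrict _, _ => true
  | loopSeq _, _ => true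
  | loopPar _, _ => true

/-- Positions in Dewey notation : words over {1,2}, encoded as lists of booleans
(`false` = 1 = left, `true` = 2 = right). `subAt i p` is the sub-interaction of `i`
at position `p` (None if `p ∉ pos(i)`). -/
def subAt : Interaction n M → List Bool → Option (Interaction n M)
  | i, [] => some i
  | strict i1 _, false :: p => subAt i1 p
  | strict _ i2, true :: p => subAt i2 p
  | seq i1 _, false :: p => subAt i1 p
  | seq _ i2, true :: p => subAt i2 p
  | alt i1 _, false :: p => subAt i1 p
  | alt _ i2, true :: p => subAt i2 p
  | par i1 _, false :: p => subAt i1 p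
  | par _ i2, true :: p => subAt i2 p
  | loopStrict i1, false :: p => subAt i1 p
  | loopSeq i1, false :: p => subAt i1 p
  | loopPar i1, false :: p => subAt i1 p
  | _, _ :: _ => none

/-- `p ∈ pos(i)` -/
def Pos (i : Interaction n M) (p : List Bool) : Prop := (subAt i p).isSome

/-- The frontier `front(i)` of immediately executable action positions. -/
def front : Interaction n M → Finset (List Bool)
  | empty => ∅
  | act _ => {[]}
  | strict i1 i2 =>
      (front i1).image (false :: ·) ∪
      (if expEps i1 then (front i2).image (true :: ·) else ∅)
  | seq i1 i2 =>
      (front i1).image (false :: ·) ∪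
      (((front i2).filter (fun p =>
          (match subAt i2 p with
           | some (act a) => avoids i1 a.lf
           | _ => false) = true)).image (true :: ·))
  | alt i1 i2 => (front i1).image (false :: ·) ∪ (front i2).image (true :: ·)
  | par i1 i2 => (front i1).image (false :: ·) ∪ (front i2).image (true :: ·)
  | loopStrict i1 => (front i1).image (false :: ·)
  | loopSeq i1 => (front i1).image (false :: ·)
  | loopPar i1 => (front i1).image (false :: ·)

/-- Pruning `prune(i,l)` (meaningful when `avoids i l`). -/
def prune : Interaction n M → Fin n → Interaction n M
  | empty, _ => empty
  | act a, _ => act a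
  | strict i1 i2, l => strict (prune i1 l) (prune i2 l)
  | seq i1 i2, l => seq (prune i1 l) (prune i2 l)
  | par i1 i2, l => par (prune i1 l) (prune i2 l)
  | alt i1 i2, l =>
      if avoids i1 l then
        if avoids i2 l then alt (prune i1 l) (prune i2 l) else prune i1 l
      else prune i2 l
  | loopStrict i1, l => if avoids i1 l then loopStrict (prune i1 l) else empty
  | loopSeq i1, l => if avoids i1 l then loopSeq (prune i1 l) else empty
  | loopPar i1, l => if avoids i1 l then loopPar (prune i1 l) else empty

/-- The small-step execution function `χ` (defined exactly on `p ∈ front i`). -/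
def exec : Interaction n M → List Bool → Option (Interaction n M × MAction n M)
  | act a, [] => some (empty, a)
  | strict i1 i2, false :: p => (exec i1 p).map (fun r => (strict r.1 i2, r.2))
  | strict _ i2, true :: p => exec i2 p
  | seq i1 i2, false :: p => (exec i1 p).map (fun r => (seq r.1 i2, r.2))
  | seq i1 i2, true :: p => (exec i2 p).map (fun r => (seq (prune i1 r.2.lf) r.1, r.2))
  | par i1 i2, false :: p => (exec i1 p).map (fun r => (par r.1 i2, r.2))
  | par i1 i2, true :: p => (exec i2 p).map (fun r => (par i1 r.1, r.2))
  | alt i1 _, false :: p => exec i1 p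
  | alt _ i2, true :: p => exec i2 p
  | loopStrict i1, false :: p => (exec i1 p).map (fun r => (strict r.1 (loopStrict i1), r.2))
  | loopSeq i1, false :: p => (exec i1 p).map (fun r => (seq r.1 (loopSeq i1), r.2))
  | loopPar i1, false :: p => (exec i1 p).map (fun r => (par r.1 (loopPar i1), r.2))
  | _, _ => none

/-- Trace semantics `Accept` : the least set containing `ε` when `exp_ε(i)` and
`act·ς'` whenever `χ(i,p) = (i',act)` for some `p ∈ front(i)` and `ς' ∈ Accept(i')`. -/
inductive Accept : Interaction n M → List (MAction n M) → Prop
  | nil {i : Interaction n M} : expEps i = true → Accept i []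
  | cons {i i' : Interaction n M} {a : MAction n M} {ς : List (MAction n M)} {p : List Bool} :
      p ∈ front i → exec i p = some (i', a) → Accept i' ς → Accept i (a :: ς)

end Interaction

open Interaction

/-- projection of a global trace onto a multi-trace. -/
def proj {n : ℕ} {M : Type} : List (MAction n M) → Fin n → List (MAction n M)
  | [], _ => []
  | a :: ς, j => if a.lf = j then a :: proj ς j else proj ς j

/-- A function `Fin n → List (MAction n M)` is a legitimate multi-trace when
each component only holds actions of its own lifeline. -/
def IsMult {n : ℕ} {M : Type} (μ : Fin n → List (MAction n M)) : Prop :=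
  ∀ j : Fin n, ∀ a ∈ μ j, a.lf = j

/-- total number of actions in a multi-trace. -/
def mtLen {n : ℕ} {M : Type} (μ : Fin n → List (MAction n M)) : ℕ :=
  ∑ j : Fin n, (μ j).length

/-- Vertices of the analysis graph. -/
inductive Vertex (n : ℕ) (M : Type) : Type where
  | cov : Vertex n M
  | uncov : Vertex n M
  | node : Interaction n M → (Fin n → List (MAction n M)) → Vertex n M

/-- The analysis relation `⇝` given by rules R1-R4. -/
inductive AnaStep {n : ℕ} {M : Type} : Vertex n M → Vertex n M → Prop
  | r1 {i : Interaction n M} {μ} :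
      (∀ j, μ j = []) → expEps i = true → AnaStep (.node i μ) .cov
  | r2 {i : Interaction n M} {μ} :
      (∀ j, μ j = []) → expEps i = false → AnaStep (.node i μ) .uncov
  | r3 {i i' : Interaction n M} {a : MAction n M} {p : List Bool} {μ} {k : Fin n} {σ} :
      p ∈ front i → exec i p = some (i', a) → μ k = a :: σ →
      AnaStep (.node i μ) (.node i' (Function.update μ k σ))
  | r4 {i : Interaction n M} {μ} :
      (¬ ∀ j, μ j = []) →
      (∀ (j : Fin n) (a : MAction n M) σ, μ j = a :: σ →
        ∀ p ∈ front i, subAt i p ≠ some (.act a)) →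
      AnaStep (.node i μ) .uncov

/-- `ω(i,μ) = Pass` : there is a path `(i,μ) ⇝* Cov`. -/
def OmegaPass {n : ℕ} {M : Type} (i : Interaction n M) (μ : Fin n → List (MAction n M)) : Prop :=
  Relation.ReflTransGen AnaStep (Vertex.node i μ) Vertex.cov


/-- `Accept` implies `Pass` :
for every interaction `i` and global trace `ς`, if `ς ∈ Accept(i)` then
`ω(i, proj(ς)) = Pass`. -/
theorem accept_implies_pass (n : ℕ) (M : Type)
    (i : Interaction n M) (ς : List (MAction n M)) (h : Accept i ς) :
    OmegaPass i (proj ς) := by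
  induction h with
  | nil he =>
      exact Relation.ReflTransGen.single (AnaStep.r1 (fun j => rfl) he)
  | @cons i i' a ς p hp hexec _ ih =>
      have hupd : Function.update (proj (a :: ς)) a.lf (proj ς a.lf) = proj ς := by
        funext j
        by_cases hj : j = a.lf
        · subst hj; simp [Function.update]
        · simp [Function.update, hj, proj, Ne.symm hj]
      have hμ : proj (a :: ς) a.lf = a :: proj ς a.lf := by simp [proj]
      exact Relation.ReflTransGen.head
        (hupd ▸ AnaStep.r3 hp hexec hμ) ih
end

section
/- For every interaction i ∈ Int and every multi-trace μ ∈ Mult, if ω(i,μ) = Pass then there exists a global trace ς ∈ Act* such that proj(ς) = μ and ς ∈ Accept(i). -/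
open Interaction

lemma uncov_not_pass {n : ℕ} {M : Type}
    (h : Relation.ReflTransGen (@AnaStep n M) Vertex.uncov Vertex.cov) : False := by
  rcases Relation.ReflTransGen.cases_head h with h | ⟨c, hc, _⟩
  · exact nomatch h
  · cases hc

/-- `Pass` implies `Accept` :
for every interaction `i` and multi-trace `μ`, if `ω(i,μ) = Pass` then there is a
global trace `ς` with `proj(ς) = μ` and `ς ∈ Accept(i)`. -/
theorem pass_implies_accept (n : ℕ) (M : Type)
    (i : Interaction n M) (μ : Fin n → List (MAction n M)) (hμ : IsMult μ)
    (h : OmegaPass i μ) :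
    ∃ ς : List (MAction n M), proj ς = μ ∧ Accept i ς := by
  suffices H : ∀ v : Vertex n M, Relation.ReflTransGen AnaStep v Vertex.cov →
      ∀ i μ, v = Vertex.node i μ → IsMult μ →
      ∃ ς : List (MAction n M), proj ς = μ ∧ Accept i ς from H _ h i μ rfl hμ
  clear hμ h i μ
  intro v hv
  induction hv using Relation.ReflTransGen.head_induction_on with
  | refl => intro i μ heq _; exact nomatch heq
  | head hstep _hrest ih =>
    rename_i a c
    intro i μ heq hμ
    subst heq
    cases hstep with
    | r1 hnil hexp =>
      exact ⟨[], by funext j; simp [proj, hnil j], Accept.nil hexp⟩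
    | r2 hnil hexp => exact absurd _hrest uncov_not_pass
    | r4 h1 h2 => exact absurd _hrest uncov_not_pass
    | r3 hp hexec hk =>
      rename_i i' act p k σ
      have half : act.lf = k := hμ k act (by rw [hk]; exact List.mem_cons_self)
      have hIs : IsMult (Function.update μ k σ) := by
        intro j a ha
        by_cases hj : j = k
        · subst hj
          apply hμ j a
          rw [hk]
          exact List.mem_cons_of_mem _ (by simpa using ha)
        · exact hμ j a (by simpa [Function.update, hj] using ha)
      obtain ⟨ς, hproj, hacc⟩ := ih _ _ rfl hIs
      refine ⟨act :: ς, ?_, Accept.cons hp hexec hacc⟩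
      funext j
      by_cases hj : j = k
      · subst hj
        have : proj ς j = σ := by rw [hproj]; simp
        simp [proj, half, this, hk]
      · have : proj ς j = μ j := by
          rw [hproj]; simp [Function.update, hj]
        have hne : act.lf ≠ j := by rw [half]; exact fun e => hj e.symm
        simp [proj, hne, this]
end

section
/- Every path of the analysis relation ⇝ starting from a vertex (i,μ) ∈ Int × Mult has length at most |μ| + 1, and every maximal path starting from (i,μ) is finite and terminates in a coverage verdict, i.e. in Cov or in UnCov. -/
open Interaction

section Aux

variable {n : ℕ} {M : Type}

lemma exec_front : ∀ (i : Interaction n M) (p : List Bool), p ∈ front i →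
    ∃ i' a, exec i p = some (i', a) ∧ subAt i p = some (.act a) := by
  intro i
  induction i with
  | empty => intro p hp; simp [front] at hp
  | act a =>
      intro p hp
      simp [front] at hp
      subst hp
      exact ⟨_, a, rfl, rfl⟩
  | strict i1 i2 ih1 ih2 =>
      intro p hp
      rcases Finset.mem_union.mp hp with h | h
      · obtain ⟨q, hq, rfl⟩ := Finset.mem_image.mp h
        obtain ⟨i', a, he, hs⟩ := ih1 q hq
        exact ⟨.strict i' i2, a, by simp [exec, he], by simpa [subAt] using hs⟩
      · split at h
        · obtain ⟨q, hq, rfl⟩ := Finset.mem_image.mp h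
          obtain ⟨i', a, he, hs⟩ := ih2 q hq
          exact ⟨i', a, by simp [exec, he], by simpa [subAt] using hs⟩
        · simp at h
  | seq i1 i2 ih1 ih2 =>
      intro p hp
      rcases Finset.mem_union.mp hp with h | h
      · obtain ⟨q, hq, rfl⟩ := Finset.mem_image.mp h
        obtain ⟨i', a, he, hs⟩ := ih1 q hq
        exact ⟨.seq i' i2, a, by simp [exec, he], by simpa [subAt] using hs⟩
      · obtain ⟨q, hq, rfl⟩ := Finset.mem_image.mp h
        obtain ⟨i', a, he, hs⟩ := ih2 q (Finset.mem_filter.mp hq).1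
        exact ⟨.seq (prune i1 a.lf) i', a, by simp [exec, he], by simpa [subAt] using hs⟩
  | alt i1 i2 ih1 ih2 =>
      intro p hp
      rcases Finset.mem_union.mp hp with h | h
      · obtain ⟨q, hq, rfl⟩ := Finset.mem_image.mp h
        obtain ⟨i', a, he, hs⟩ := ih1 q hq
        exact ⟨i', a, by simp [exec, he], by simpa [subAt] using hs⟩
      · obtain ⟨q, hq, rfl⟩ := Finset.mem_image.mp h
        obtain ⟨i', a, he, hs⟩ := ih2 q hq
        exact ⟨i', a, by simp [exec, he], by simpa [subAt] using hs⟩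
  | par i1 i2 ih1 ih2 =>
      intro p hp
      rcases Finset.mem_union.mp hp with h | h
      · obtain ⟨q, hq, rfl⟩ := Finset.mem_image.mp h
        obtain ⟨i', a, he, hs⟩ := ih1 q hq
        exact ⟨.par i' i2, a, by simp [exec, he], by simpa [subAt] using hs⟩
      · obtain ⟨q, hq, rfl⟩ := Finset.mem_image.mp h
        obtain ⟨i', a, he, hs⟩ := ih2 q hq
        exact ⟨.par i1 i', a, by simp [exec, he], by simpa [subAt] using hs⟩
  | loopStrict i1 ih1 =>
      intro p hp
      obtain ⟨q, hq, rfl⟩ := Finset.mem_image.mp hp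
      obtain ⟨i', a, he, hs⟩ := ih1 q hq
      exact ⟨.strict i' (.loopStrict i1), a, by simp [exec, he], by simpa [subAt] using hs⟩
  | loopSeq i1 ih1 =>
      intro p hp
      obtain ⟨q, hq, rfl⟩ := Finset.mem_image.mp hp
      obtain ⟨i', a, he, hs⟩ := ih1 q hq
      exact ⟨.seq i' (.loopSeq i1), a, by simp [exec, he], by simpa [subAt] using hs⟩
  | loopPar i1 ih1 =>
      intro p hp
      obtain ⟨q, hq, rfl⟩ := Finset.mem_image.mp hp
      obtain ⟨i', a, he, hs⟩ := ih1 q hq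
      exact ⟨.par i' (.loopPar i1), a, by simp [exec, he], by simpa [subAt] using hs⟩

lemma mtLen_update (μ : Fin n → List (MAction n M)) (k : Fin n) (a : MAction n M)
    (σ : List (MAction n M)) (h : μ k = a :: σ) :
    mtLen (Function.update μ k σ) + 1 = mtLen μ := by
  unfold mtLen
  rw [Fintype.sum_eq_add_sum_compl k, Fintype.sum_eq_add_sum_compl k (fun j => (μ j).length)]
  have hs : ∑ j ∈ ({k}ᶜ : Finset (Fin n)), ((Function.update μ k σ) j).length
      = ∑ j ∈ ({k}ᶜ : Finset (Fin n)), (μ j).length := by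
    refine Finset.sum_congr rfl fun j hj => ?_
    rw [Function.update_of_ne (by simpa using hj)]
  rw [hs, Function.update_self, h]
  simp
  omega

lemma step_out {i : Interaction n M} {μ} {v : Vertex n M}
    (h : AnaStep (Vertex.node i μ) v) :
    v = Vertex.cov ∨ v = Vertex.uncov ∨
      ∃ i' μ', v = Vertex.node i' μ' ∧ mtLen μ' + 1 = mtLen μ := by
  cases h with
  | r1 => left; rfl
  | r2 => right; left; rfl
  | r4 => right; left; rfl
  | r3 hp hex hk => exact Or.inr (Or.inr ⟨_, _, rfl, mtLen_update _ _ _ _ hk⟩)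

lemma node_has_succ (i : Interaction n M) (μ : Fin n → List (MAction n M)) :
    ∃ w, AnaStep (Vertex.node i μ) w := by
  by_cases hE : ∀ j, μ j = []
  · by_cases he : expEps i = true
    · exact ⟨_, .r1 hE he⟩
    · exact ⟨_, .r2 hE (by simpa using he)⟩
  · by_cases h4 : ∀ (j : Fin n) (a : MAction n M) σ, μ j = a :: σ →
        ∀ p ∈ front i, subAt i p ≠ some (.act a)
    · exact ⟨_, .r4 hE h4⟩
    · push_neg at h4
      obtain ⟨j, a, σ, hj, p, hp, hsub⟩ := h4
      obtain ⟨i', a', hex, hsub'⟩ := exec_front i p hp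
      have : a' = a := by
        rw [hsub'] at hsub
        exact Interaction.act.inj (Option.some.inj hsub)
      subst this
      exact ⟨_, .r3 hp hex hj⟩

end Aux

/-- every path of `⇝` starting at a vertex `(i,μ)` has length at most
`|μ| + 1`, and every maximal path starting at `(i,μ)` is finite and terminates in a
coverage verdict (`Cov` or `UnCov`). -/
theorem paths_bounded_and_terminate (n : ℕ) (M : Type)
    (i : Interaction n M) (μ : Fin n → List (MAction n M)) (hμ : IsMult μ) :
    (∀ (f : ℕ → Vertex n M) (k : ℕ),
        f 0 = Vertex.node i μ → (∀ t < k, AnaStep (f t) (f (t + 1))) →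
        k ≤ mtLen μ + 1) ∧
    (∀ v : Vertex n M, Relation.ReflTransGen AnaStep (Vertex.node i μ) v →
        (∀ w, ¬ AnaStep v w) → v = Vertex.cov ∨ v = Vertex.uncov) := by
  have bound : ∀ (k : ℕ) (μ : Fin n → List (MAction n M)) (i : Interaction n M)
      (f : ℕ → Vertex n M), f 0 = Vertex.node i μ →
      (∀ t < k, AnaStep (f t) (f (t + 1))) → k ≤ mtLen μ + 1 := by
    intro k
    induction k with
    | zero => intros; omega
    | succ k ih =>
      intro μ i f hf0 hstep
      have h0 := hstep 0 (Nat.succ_pos k)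
      rw [hf0] at h0
      rcases step_out h0 with h1 | h1 | ⟨i', μ', h1, hlen⟩
      · match k with
        | 0 => omega
        | k + 1 =>
          exfalso
          have h2 := hstep 1 (by omega)
          rw [h1] at h2
          cases h2
      · match k with
        | 0 => omega
        | k + 1 =>
          exfalso
          have h2 := hstep 1 (by omega)
          rw [h1] at h2
          cases h2
      · have := ih μ' i' (fun t => f (t + 1)) h1 (fun t ht => hstep (t + 1) (by omega))
        omega
  refine ⟨fun f k hf0 hstep => bound k μ i f hf0 hstep, fun v _ hmax => ?_⟩
  cases v with
  | cov => exact Or.inl rfl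
  | uncov => exact Or.inr rfl
  | node i' μ' =>
      exfalso
      obtain ⟨w, hw⟩ := node_has_succ i' μ'
      exact hmax w hw
end

section
/- The analysis graph defined by the relation ⇝ is acyclic: no vertex is reachable from itself by a nonempty path of ⇝-edges. -/
open Interaction

/-- Measure on vertices: nodes weigh `mtLen μ + 1`, sinks weigh 0. -/
def vMeasure {n : ℕ} {M : Type} : Vertex n M → ℕ
  | .cov => 0
  | .uncov => 0
  | .node _ μ => mtLen μ + 1

lemma mtLen_update_lt {n : ℕ} {M : Type} (μ : Fin n → List (MAction n M))
    (k : Fin n) (a : MAction n M) (σ : List (MAction n M)) (h : μ k = a :: σ) :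
    mtLen (Function.update μ k σ) < mtLen μ := by
  unfold mtLen
  have h1 : ∑ j : Fin n, (Function.update μ k σ j).length
      = σ.length + ∑ j ∈ Finset.univ.erase k, (μ j).length := by
    rw [← Finset.add_sum_erase _ _ (Finset.mem_univ k)]
    congr 1
    · simp
    · exact Finset.sum_congr rfl fun j hj => by
        rw [Function.update_of_ne (Finset.ne_of_mem_erase hj)]
  have h2 : ∑ j : Fin n, (μ j).length
      = (μ k).length + ∑ j ∈ Finset.univ.erase k, (μ j).length := by
    rw [← Finset.add_sum_erase _ _ (Finset.mem_univ k)]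
  rw [h1, h2, h]
  simp [Nat.lt_succ_self]

lemma anaStep_measure_lt {n : ℕ} {M : Type} {v w : Vertex n M}
    (h : AnaStep v w) : vMeasure w < vMeasure v := by
  cases h with
  | r1 _ _ => simp [vMeasure]
  | r2 _ _ => simp [vMeasure]
  | r4 _ _ => simp [vMeasure]
  | r3 hp he hμ =>
      simp only [vMeasure]
      exact Nat.succ_lt_succ (mtLen_update_lt _ _ _ _ hμ)

/-- the analysis graph defined by `⇝` is acyclic : no vertex is
reachable from itself by a nonempty path of `⇝`-edges. -/
theorem anaStep_acyclic (n : ℕ) (M : Type) :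
    ∀ v : Vertex n M, ¬ Relation.TransGen AnaStep v v := by
  have key : ∀ {a b : Vertex n M}, Relation.TransGen AnaStep a b →
      vMeasure b < vMeasure a := by
    intro a b h
    induction h with
    | single h => exact anaStep_measure_lt h
    | tail _ h ih => exact lt_trans (anaStep_measure_lt h) ih
  exact fun v h => lt_irrefl _ (key h)
end

section
/- For every interaction i ∈ Int, if exp_ε(i) = ⊥ then the frontier front(i) is nonempty; equivalently, if front(i) = ∅ then exp_ε(i) = ⊤. -/
open Interaction

lemma avoids_of_expEps {n : ℕ} {M : Type} (i : Interaction n M) (l : Fin n)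
    (h : expEps i = true) : avoids i l = true := by
  induction i with
  | empty => rfl
  | act a => simp [expEps] at h
  | strict i1 i2 ih1 ih2 =>
      simp [expEps] at h; simp [avoids, ih1 h.1, ih2 h.2]
  | seq i1 i2 ih1 ih2 =>
      simp [expEps] at h; simp [avoids, ih1 h.1, ih2 h.2]
  | alt i1 i2 ih1 ih2 =>
      simp [expEps] at h
      rcases h with h | h
      · simp [avoids, ih1 h]
      · simp [avoids, ih2 h]
  | par i1 i2 ih1 ih2 =>
      simp [expEps] at h; simp [avoids, ih1 h.1, ih2 h.2]
  | loopStrict i1 ih => rfl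
  | loopSeq i1 ih => rfl
  | loopPar i1 ih => rfl

lemma act_of_mem_front {n : ℕ} {M : Type} (i : Interaction n M) (p : List Bool)
    (h : p ∈ front i) : ∃ a : MAction n M, subAt i p = some (Interaction.act a) := by
  induction i generalizing p with
  | empty => simp [front] at h
  | act a =>
      simp [front] at h; subst h; exact ⟨a, rfl⟩
  | strict i1 i2 ih1 ih2 =>
      simp only [front, Finset.mem_union, Finset.mem_image] at h
      rcases h with ⟨q, hq, rfl⟩ | h
      · exact ih1 q hq
      · split at h
        · simp only [Finset.mem_image] at h
          obtain ⟨q, hq, rfl⟩ := h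
          exact ih2 q hq
        · simp at h
  | seq i1 i2 ih1 ih2 =>
      simp only [front, Finset.mem_union, Finset.mem_image, Finset.mem_filter] at h
      rcases h with ⟨q, hq, rfl⟩ | ⟨q, ⟨hq, _⟩, rfl⟩
      · exact ih1 q hq
      · exact ih2 q hq
  | alt i1 i2 ih1 ih2 =>
      simp only [front, Finset.mem_union, Finset.mem_image] at h
      rcases h with ⟨q, hq, rfl⟩ | ⟨q, hq, rfl⟩
      · exact ih1 q hq
      · exact ih2 q hq
  | par i1 i2 ih1 ih2 =>
      simp only [front, Finset.mem_union, Finset.mem_image] at h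
      rcases h with ⟨q, hq, rfl⟩ | ⟨q, hq, rfl⟩
      · exact ih1 q hq
      · exact ih2 q hq
  | loopStrict i1 ih =>
      simp only [front, Finset.mem_image] at h
      obtain ⟨q, hq, rfl⟩ := h; exact ih q hq
  | loopSeq i1 ih =>
      simp only [front, Finset.mem_image] at h
      obtain ⟨q, hq, rfl⟩ := h; exact ih q hq
  | loopPar i1 ih =>
      simp only [front, Finset.mem_image] at h
      obtain ⟨q, hq, rfl⟩ := h; exact ih q hq

lemma front_nonempty_aux {n : ℕ} {M : Type} (i : Interaction n M)
    (h : expEps i = false) : (front i).Nonempty := by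
  induction i with
  | empty => simp [expEps] at h
  | act a => exact ⟨[], by simp [front]⟩
  | strict i1 i2 ih1 ih2 =>
      simp only [expEps, Bool.and_eq_false_iff] at h
      by_cases h1 : expEps i1 = true
      · rcases h with h | h
        · simp [h1] at h
        · obtain ⟨p, hp⟩ := ih2 h
          refine ⟨true :: p, ?_⟩
          simp only [front, h1, if_true, Finset.mem_union, Finset.mem_image]
          exact Or.inr ⟨p, hp, rfl⟩
      · obtain ⟨p, hp⟩ := ih1 (by simpa using h1)
        exact ⟨false :: p, by simp only [front, Finset.mem_union, Finset.mem_image]; exact Or.inl ⟨p, hp, rfl⟩⟩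
  | seq i1 i2 ih1 ih2 =>
      simp only [expEps, Bool.and_eq_false_iff] at h
      by_cases h1 : expEps i1 = true
      · rcases h with h | h
        · simp [h1] at h
        · obtain ⟨p, hp⟩ := ih2 h
          obtain ⟨a, ha⟩ := act_of_mem_front i2 p hp
          refine ⟨true :: p, ?_⟩
          simp only [front, Finset.mem_union, Finset.mem_image, Finset.mem_filter]
          right
          exact ⟨p, ⟨hp, by simp [ha, avoids_of_expEps i1 a.lf h1]⟩, rfl⟩
      · obtain ⟨p, hp⟩ := ih1 (by simpa using h1)
        exact ⟨false :: p, by simp only [front, Finset.mem_union, Finset.mem_image]; exact Or.inl ⟨p, hp, rfl⟩⟩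
  | alt i1 i2 ih1 ih2 =>
      simp only [expEps, Bool.or_eq_false_iff] at h
      obtain ⟨p, hp⟩ := ih1 h.1
      exact ⟨false :: p, by simp only [front, Finset.mem_union, Finset.mem_image]; exact Or.inl ⟨p, hp, rfl⟩⟩
  | par i1 i2 ih1 ih2 =>
      simp only [expEps, Bool.and_eq_false_iff] at h
      rcases h with h | h
      · obtain ⟨p, hp⟩ := ih1 h
        exact ⟨false :: p, by simp only [front, Finset.mem_union, Finset.mem_image]; exact Or.inl ⟨p, hp, rfl⟩⟩
      · obtain ⟨p, hp⟩ := ih2 h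
        exact ⟨true :: p, by simp only [front, Finset.mem_union, Finset.mem_image]; exact Or.inr ⟨p, hp, rfl⟩⟩
  | loopStrict i1 ih => simp [expEps] at h
  | loopSeq i1 ih => simp [expEps] at h
  | loopPar i1 ih => simp [expEps] at h

/-- if `exp_ε(i) = ⊥` then `front(i)` is nonempty;
equivalently, if `front(i) = ∅` then `exp_ε(i) = ⊤`. -/
theorem front_nonempty_of_not_expEps (n : ℕ) (M : Type) (i : Interaction n M) :
    (expEps i = false → (front i).Nonempty) ∧
    (front i = ∅ → expEps i = true) := by
  constructor
  · exact front_nonempty_aux i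
  · intro h
    by_contra hne
    have := front_nonempty_aux i (by simpa using hne)
    rw [h] at this
    exact Finset.not_nonempty_empty this
end

section
/- For every interaction i ∈ Int, the set Accept(i) of accepted traces is nonempty. -/
open Interaction

namespace Interaction

variable {n : ℕ} {M : Type}

theorem expEps_avoids : ∀ (i : Interaction n M), expEps i = true → ∀ l, avoids i l = true := by
  intro i
  induction i with
  | empty => intros; rfl
  | act a => intro h; simp [expEps] at h
  | strict i1 i2 ih1 ih2 =>
      intro h l; simp [expEps] at h; simp [avoids, ih1 h.1 l, ih2 h.2 l]
  | seq i1 i2 ih1 ih2 =>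
      intro h l; simp [expEps] at h; simp [avoids, ih1 h.1 l, ih2 h.2 l]
  | alt i1 i2 ih1 ih2 =>
      intro h l; simp [expEps] at h; simp [avoids]
      rcases h with h | h
      · exact Or.inl (ih1 h l)
      · exact Or.inr (ih2 h l)
  | par i1 i2 ih1 ih2 =>
      intro h l; simp [expEps] at h; simp [avoids, ih1 h.1 l, ih2 h.2 l]
  | loopStrict i1 ih => intros; rfl
  | loopSeq i1 ih => intros; rfl
  | loopPar i1 ih => intros; rfl

theorem expEps_prune : ∀ (i : Interaction n M) (l), expEps i = true → expEps (prune i l) = true := by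
  intro i
  induction i with
  | empty => intros; rfl
  | act a => intro l h; simp [expEps] at h
  | strict i1 i2 ih1 ih2 =>
      intro l h; simp [expEps] at h; simp [prune, expEps, ih1 l h.1, ih2 l h.2]
  | seq i1 i2 ih1 ih2 =>
      intro l h; simp [expEps] at h; simp [prune, expEps, ih1 l h.1, ih2 l h.2]
  | alt i1 i2 ih1 ih2 =>
      intro l h; simp [expEps] at h
      simp only [prune]
      split
      · split
        · simp only [expEps, Bool.or_eq_true]
          rcases h with h | h
          · exact Or.inl (ih1 l h)
          · exact Or.inr (ih2 l h)
        · rename_i h1 h2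
          rcases h with h | h
          · exact ih1 l h
          · exact absurd (expEps_avoids i2 h l) h2
      · rename_i h1
        rcases h with h | h
        · exact absurd (expEps_avoids i1 h l) h1
        · exact ih2 l h
  | par i1 i2 ih1 ih2 =>
      intro l h; simp [expEps] at h; simp [prune, expEps, ih1 l h.1, ih2 l h.2]
  | loopStrict i1 ih => intro l h; simp only [prune]; split <;> rfl
  | loopSeq i1 ih => intro l h; simp only [prune]; split <;> rfl
  | loopPar i1 ih => intro l h; simp only [prune]; split <;> rfl

theorem exec_subAt : ∀ (i : Interaction n M) (p : List Bool) (i' : Interaction n M)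
    (a : MAction n M), exec i p = some (i', a) → subAt i p = some (.act a) := by
  intro i
  induction i with
  | empty => intro p i' a h; cases p <;> simp [exec] at h
  | act b =>
      intro p i' a h
      cases p with
      | nil =>
          simp only [exec, Option.some.injEq] at h
          injection h with h1 h2
          simp [subAt, h2]
      | cons x q => cases x <;> simp [exec] at h
  | strict i1 i2 IH1 ih2 =>
      intro p i' a h
      cases p with
      | nil => simp [exec] at h
      | cons x q =>
        cases x with
        | false =>
          simp only [exec, Option.map_eq_some_iff] at h
          obtain ⟨⟨j, b⟩, he, h2⟩ := h
          injection h2 with h2a h2b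
          subst h2a; subst h2b
          exact IH1 q j b he
        | true => exact ih2 q i' a h
  | seq i1 i2 IH1 ih2 =>
      intro p i' a h
      cases p with
      | nil => simp [exec] at h
      | cons x q =>
        cases x with
        | false =>
          simp only [exec, Option.map_eq_some_iff] at h
          obtain ⟨⟨j, b⟩, he, h2⟩ := h
          injection h2 with h2a h2b
          subst h2a; subst h2b
          exact IH1 q j b he
        | true =>
          simp only [exec, Option.map_eq_some_iff] at h
          obtain ⟨⟨j, b⟩, he, h2⟩ := h
          injection h2 with h2a h2b
          subst h2b
          exact ih2 q j b he
  | alt i1 i2 IH1 ih2 =>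
      intro p i' a h
      cases p with
      | nil => simp [exec] at h
      | cons x q =>
        cases x with
        | false => exact IH1 q i' a h
        | true => exact ih2 q i' a h
  | par i1 i2 IH1 ih2 =>
      intro p i' a h
      cases p with
      | nil => simp [exec] at h
      | cons x q =>
        cases x with
        | false =>
          simp only [exec, Option.map_eq_some_iff] at h
          obtain ⟨⟨j, b⟩, he, h2⟩ := h
          injection h2 with h2a h2b
          subst h2a; subst h2b
          exact IH1 q j b he
        | true =>
          simp only [exec, Option.map_eq_some_iff] at h
          obtain ⟨⟨j, b⟩, he, h2⟩ := h
          injection h2 with h2a h2b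
          subst h2b
          exact ih2 q j b he
  | loopStrict i1 IH1 =>
      intro p i' a h
      cases p with
      | nil => simp [exec] at h
      | cons x q =>
        cases x with
        | false =>
          simp only [exec, Option.map_eq_some_iff] at h
          obtain ⟨⟨j, b⟩, he, h2⟩ := h
          injection h2 with h2a h2b
          subst h2a; subst h2b
          exact IH1 q j b he
        | true => simp [exec] at h
  | loopSeq i1 IH1 =>
      intro p i' a h
      cases p with
      | nil => simp [exec] at h
      | cons x q =>
        cases x with
        | false =>
          simp only [exec, Option.map_eq_some_iff] at h
          obtain ⟨⟨j, b⟩, he, h2⟩ := h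
          injection h2 with h2a h2b
          subst h2a; subst h2b
          exact IH1 q j b he
        | true => simp [exec] at h
  | loopPar i1 IH1 =>
      intro p i' a h
      cases p with
      | nil => simp [exec] at h
      | cons x q =>
        cases x with
        | false =>
          simp only [exec, Option.map_eq_some_iff] at h
          obtain ⟨⟨j, b⟩, he, h2⟩ := h
          injection h2 with h2a h2b
          subst h2a; subst h2b
          exact IH1 q j b he
        | true => simp [exec] at h

theorem accept_alt_left {i1 i2 : Interaction n M} {s : List (MAction n M)}
    (h : Accept i1 s) : Accept (alt i1 i2) s := by
  cases h with
  | nil he => exact Accept.nil (by simp [expEps, he])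
  | @cons i i' a ς p hp he hacc =>
      exact Accept.cons (p := false :: p)
        (Finset.mem_union_left _ (Finset.mem_image_of_mem _ hp)) he hacc

theorem accept_strict_eps {i2 : Interaction n M} {s : List (MAction n M)}
    (h : Accept i2 s) : ∀ (i1 : Interaction n M), expEps i1 = true →
    Accept (strict i1 i2) s := by
  induction h with
  | nil he => intro i1 h1; exact Accept.nil (by simp [expEps, he, h1])
  | @cons i i' a ς p hp he hacc ih =>
      intro i1 h1
      exact Accept.cons (p := true :: p)
        (Finset.mem_union_right _
          (by rw [if_pos h1]; exact Finset.mem_image_of_mem _ hp)) he hacc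

theorem accept_strict {i1 i2 : Interaction n M} {s1 s2 : List (MAction n M)}
    (h1 : Accept i1 s1) (h2 : Accept i2 s2) : Accept (strict i1 i2) (s1 ++ s2) := by
  induction h1 with
  | nil he => simpa using accept_strict_eps h2 _ he
  | @cons i i' a ς p hp he _ ih =>
      exact Accept.cons (p := false :: p)
        (Finset.mem_union_left _ (Finset.mem_image_of_mem _ hp))
        (by simp [exec, he]) ih

theorem accept_seq_eps {i2 : Interaction n M} {s : List (MAction n M)}
    (h : Accept i2 s) : ∀ (i1 : Interaction n M), expEps i1 = true →
    Accept (seq i1 i2) s := by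
  induction h with
  | nil he => intro i1 h1; exact Accept.nil (by simp [expEps, he, h1])
  | @cons i i' a ς p hp he _ ih =>
      intro i1 h1
      refine Accept.cons (p := true :: p)
        (Finset.mem_union_right _ (Finset.mem_image_of_mem _ (Finset.mem_filter.mpr
          ⟨hp, by rw [exec_subAt _ _ _ _ he]; exact expEps_avoids i1 h1 a.lf⟩)))
        (by simp [exec, he]) (ih (prune i1 a.lf) (expEps_prune i1 a.lf h1))

theorem accept_seq {i1 i2 : Interaction n M} {s1 s2 : List (MAction n M)}
    (h1 : Accept i1 s1) (h2 : Accept i2 s2) : Accept (seq i1 i2) (s1 ++ s2) := by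
  induction h1 with
  | nil he => simpa using accept_seq_eps h2 _ he
  | @cons i i' a ς p hp he _ ih =>
      exact Accept.cons (p := false :: p)
        (Finset.mem_union_left _ (Finset.mem_image_of_mem _ hp))
        (by simp [exec, he]) ih

theorem accept_par_eps {i2 : Interaction n M} {s : List (MAction n M)}
    (h : Accept i2 s) : ∀ (i1 : Interaction n M), expEps i1 = true →
    Accept (par i1 i2) s := by
  induction h with
  | nil he => intro i1 h1; exact Accept.nil (by simp [expEps, he, h1])
  | @cons i i' a ς p hp he _ ih =>
      intro i1 h1
      exact Accept.cons (p := true :: p)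
        (Finset.mem_union_right _ (Finset.mem_image_of_mem _ hp))
        (by simp [exec, he]) (ih i1 h1)

theorem accept_par {i1 i2 : Interaction n M} {s1 s2 : List (MAction n M)}
    (h1 : Accept i1 s1) (h2 : Accept i2 s2) : Accept (par i1 i2) (s1 ++ s2) := by
  induction h1 with
  | nil he => simpa using accept_par_eps h2 _ he
  | @cons i i' a ς p hp he _ ih =>
      exact Accept.cons (p := false :: p)
        (Finset.mem_union_left _ (Finset.mem_image_of_mem _ hp))
        (by simp [exec, he]) ih

end Interaction

/-- for every interaction `i`, the set `Accept(i)` is nonempty. -/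
theorem accept_nonempty (n : ℕ) (M : Type) (i : Interaction n M) :
    ∃ ς : List (MAction n M), Accept i ς := by
  induction i with
  | empty => exact ⟨[], Accept.nil rfl⟩
  | act a =>
      exact ⟨[a], Accept.cons (p := []) (i' := Interaction.empty)
        (by simp [front]) rfl (Accept.nil rfl)⟩
  | strict i1 i2 ih1 ih2 =>
      obtain ⟨s1, h1⟩ := ih1; obtain ⟨s2, h2⟩ := ih2
      exact ⟨s1 ++ s2, accept_strict h1 h2⟩
  | seq i1 i2 ih1 ih2 =>
      obtain ⟨s1, h1⟩ := ih1; obtain ⟨s2, h2⟩ := ih2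
      exact ⟨s1 ++ s2, accept_seq h1 h2⟩
  | alt i1 i2 ih1 ih2 =>
      obtain ⟨s1, h1⟩ := ih1
      exact ⟨s1, accept_alt_left h1⟩
  | par i1 i2 ih1 ih2 =>
      obtain ⟨s1, h1⟩ := ih1; obtain ⟨s2, h2⟩ := ih2
      exact ⟨s1 ++ s2, accept_par h1 h2⟩
  | loopStrict i1 ih => exact ⟨[], Accept.nil rfl⟩
  | loopSeq i1 ih => exact ⟨[], Accept.nil rfl⟩
  | loopPar i1 ih => exact ⟨[], Accept.nil rfl⟩
end

section
/- The empty interaction is a neutral element for the scheduling operators in the trace semantics: for every interaction i ∈ Int and every f ∈ {strict, seq, par}, Accept(f(i,∅)) = Accept(i) and Accept(f(∅,i)) = Accept(i). -/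
open Interaction

namespace Interaction

variable {n : ℕ} {M : Type}

lemma accept_nil_iff {i : Interaction n M} : Accept i [] ↔ expEps i = true :=
  ⟨fun h => by cases h with | nil h => exact h, Accept.nil⟩

lemma accept_cons_iff {i : Interaction n M} {a : MAction n M} {ς : List (MAction n M)} :
    Accept i (a :: ς) ↔ ∃ p ∈ front i, ∃ i', exec i p = some (i', a) ∧ Accept i' ς := by
  constructor
  · intro h
    cases h with
    | cons hp he hs => exact ⟨_, hp, _, he, hs⟩
  · rintro ⟨p, hp, i', he, hs⟩
    exact Accept.cons hp he hs

lemma subAt_front {i : Interaction n M} {p : List Bool} (h : p ∈ front i) :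
    ∃ a : MAction n M, subAt i p = some (.act a) := by
  induction i generalizing p with
  | empty => simp [front] at h
  | act a => simp [front] at h; subst h; exact ⟨a, rfl⟩
  | strict i1 i2 ih1 ih2 =>
      simp only [front] at h
      rcases Finset.mem_union.1 h with h | h
      · obtain ⟨q, hq, rfl⟩ := Finset.mem_image.1 h
        simpa [subAt] using ih1 hq
      · split at h
        · obtain ⟨q, hq, rfl⟩ := Finset.mem_image.1 h
          simpa [subAt] using ih2 hq
        · simp at h
  | seq i1 i2 ih1 ih2 =>
      simp only [front] at h
      rcases Finset.mem_union.1 h with h | h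
      · obtain ⟨q, hq, rfl⟩ := Finset.mem_image.1 h
        simpa [subAt] using ih1 hq
      · obtain ⟨q, hq, rfl⟩ := Finset.mem_image.1 h
        simpa [subAt] using ih2 (Finset.mem_filter.1 hq).1
  | alt i1 i2 ih1 ih2 =>
      simp only [front] at h
      rcases Finset.mem_union.1 h with h | h
      · obtain ⟨q, hq, rfl⟩ := Finset.mem_image.1 h
        simpa [subAt] using ih1 hq
      · obtain ⟨q, hq, rfl⟩ := Finset.mem_image.1 h
        simpa [subAt] using ih2 hq
  | par i1 i2 ih1 ih2 =>
      simp only [front] at h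
      rcases Finset.mem_union.1 h with h | h
      · obtain ⟨q, hq, rfl⟩ := Finset.mem_image.1 h
        simpa [subAt] using ih1 hq
      · obtain ⟨q, hq, rfl⟩ := Finset.mem_image.1 h
        simpa [subAt] using ih2 hq
  | loopStrict i1 ih1 =>
      simp only [front] at h
      obtain ⟨q, hq, rfl⟩ := Finset.mem_image.1 h
      simpa [subAt] using ih1 hq
  | loopSeq i1 ih1 =>
      simp only [front] at h
      obtain ⟨q, hq, rfl⟩ := Finset.mem_image.1 h
      simpa [subAt] using ih1 hq
  | loopPar i1 ih1 =>
      simp only [front] at h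
      obtain ⟨q, hq, rfl⟩ := Finset.mem_image.1 h
      simpa [subAt] using ih1 hq

lemma strict_empty_right : ∀ (ς : List (MAction n M)) (i : Interaction n M),
    Accept (strict i empty) ς ↔ Accept i ς := by
  intro ς
  induction ς with
  | nil => intro i; simp [accept_nil_iff, expEps]
  | cons a ς ih =>
      intro i
      simp only [accept_cons_iff]
      constructor
      · rintro ⟨p, hp, i', he, hs⟩
        simp only [front, expEps] at hp
        rcases Finset.mem_union.1 hp with hp | hp
        · obtain ⟨q, hq, rfl⟩ := Finset.mem_image.1 hp
          simp only [exec, Option.map_eq_some_iff] at he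
          obtain ⟨r, hr, heq⟩ := he
          injection heq with h1 h2
          subst h1; subst h2
          exact ⟨q, hq, r.1, by rw [hr], (ih _).1 hs⟩
        · split at hp <;> simp [front] at hp
      · rintro ⟨p, hp, i', he, hs⟩
        refine ⟨false :: p, ?_, strict i' empty, ?_, (ih _).2 hs⟩
        · simp only [front]
          exact Finset.mem_union_left _ (Finset.mem_image.2 ⟨p, hp, rfl⟩)
        · simp [exec, he]

lemma strict_empty_left : ∀ (ς : List (MAction n M)) (i : Interaction n M),
    Accept (strict empty i) ς ↔ Accept i ς := by
  intro ς i
  cases ς with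
  | nil => simp [accept_nil_iff, expEps]
  | cons a ς =>
      simp only [accept_cons_iff]
      constructor
      · rintro ⟨p, hp, i', he, hs⟩
        simp only [front, expEps] at hp
        rw [if_pos trivial] at hp
        rcases Finset.mem_union.1 hp with hp | hp
        · simp [front] at hp
        · obtain ⟨q, hq, rfl⟩ := Finset.mem_image.1 hp
          simp only [exec] at he
          exact ⟨q, hq, i', he, hs⟩
      · rintro ⟨p, hp, i', he, hs⟩
        refine ⟨true :: p, ?_, i', ?_, hs⟩
        · simp only [front, expEps]
          rw [if_pos trivial]
          exact Finset.mem_union_right _ (Finset.mem_image.2 ⟨p, hp, rfl⟩)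
        · simpa [exec] using he

lemma seq_empty_right : ∀ (ς : List (MAction n M)) (i : Interaction n M),
    Accept (seq i empty) ς ↔ Accept i ς := by
  intro ς
  induction ς with
  | nil => intro i; simp [accept_nil_iff, expEps]
  | cons a ς ih =>
      intro i
      simp only [accept_cons_iff]
      constructor
      · rintro ⟨p, hp, i', he, hs⟩
        simp only [front] at hp
        rcases Finset.mem_union.1 hp with hp | hp
        · obtain ⟨q, hq, rfl⟩ := Finset.mem_image.1 hp
          simp only [exec, Option.map_eq_some_iff] at he
          obtain ⟨r, hr, heq⟩ := he
          injection heq with h1 h2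
          subst h1; subst h2
          exact ⟨q, hq, r.1, by rw [hr], (ih _).1 hs⟩
        · simp [front] at hp
      · rintro ⟨p, hp, i', he, hs⟩
        refine ⟨false :: p, ?_, seq i' empty, ?_, (ih _).2 hs⟩
        · simp only [front]
          exact Finset.mem_union_left _ (Finset.mem_image.2 ⟨p, hp, rfl⟩)
        · simp [exec, he]

lemma seq_empty_left : ∀ (ς : List (MAction n M)) (i : Interaction n M),
    Accept (seq empty i) ς ↔ Accept i ς := by
  intro ς
  induction ς with
  | nil => intro i; simp [accept_nil_iff, expEps]
  | cons a ς ih =>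
      intro i
      simp only [accept_cons_iff]
      constructor
      · rintro ⟨p, hp, i', he, hs⟩
        simp only [front] at hp
        rcases Finset.mem_union.1 hp with hp | hp
        · simp [front] at hp
        · obtain ⟨q, hq, rfl⟩ := Finset.mem_image.1 hp
          have hq' := (Finset.mem_filter.1 hq).1
          simp only [exec, Option.map_eq_some_iff] at he
          obtain ⟨r, hr, heq⟩ := he
          injection heq with h1 h2
          subst h1; subst h2
          exact ⟨q, hq', r.1, by rw [hr], (ih _).1 hs⟩
      · rintro ⟨p, hp, i', he, hs⟩
        refine ⟨true :: p, ?_, seq empty i', ?_, (ih _).2 hs⟩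
        · simp only [front]
          refine Finset.mem_union_right _ (Finset.mem_image.2 ⟨p, ?_, rfl⟩)
          refine Finset.mem_filter.2 ⟨hp, ?_⟩
          obtain ⟨a0, ha0⟩ := subAt_front hp
          rw [ha0]
          rfl
        · simp only [exec, he, Option.map_some]
          rfl

lemma par_empty_right : ∀ (ς : List (MAction n M)) (i : Interaction n M),
    Accept (par i empty) ς ↔ Accept i ς := by
  intro ς
  induction ς with
  | nil => intro i; simp [accept_nil_iff, expEps]
  | cons a ς ih =>
      intro i
      simp only [accept_cons_iff]
      constructor
      · rintro ⟨p, hp, i', he, hs⟩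
        simp only [front] at hp
        rcases Finset.mem_union.1 hp with hp | hp
        · obtain ⟨q, hq, rfl⟩ := Finset.mem_image.1 hp
          simp only [exec, Option.map_eq_some_iff] at he
          obtain ⟨r, hr, heq⟩ := he
          injection heq with h1 h2
          subst h1; subst h2
          exact ⟨q, hq, r.1, by rw [hr], (ih _).1 hs⟩
        · simp [front] at hp
      · rintro ⟨p, hp, i', he, hs⟩
        refine ⟨false :: p, ?_, par i' empty, ?_, (ih _).2 hs⟩
        · simp only [front]
          exact Finset.mem_union_left _ (Finset.mem_image.2 ⟨p, hp, rfl⟩)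
        · simp [exec, he]

lemma par_empty_left : ∀ (ς : List (MAction n M)) (i : Interaction n M),
    Accept (par empty i) ς ↔ Accept i ς := by
  intro ς
  induction ς with
  | nil => intro i; simp [accept_nil_iff, expEps]
  | cons a ς ih =>
      intro i
      simp only [accept_cons_iff]
      constructor
      · rintro ⟨p, hp, i', he, hs⟩
        simp only [front] at hp
        rcases Finset.mem_union.1 hp with hp | hp
        · simp [front] at hp
        · obtain ⟨q, hq, rfl⟩ := Finset.mem_image.1 hp
          simp only [exec, Option.map_eq_some_iff] at he
          obtain ⟨r, hr, heq⟩ := he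
          injection heq with h1 h2
          subst h1; subst h2
          exact ⟨q, hq, r.1, by rw [hr], (ih _).1 hs⟩
      · rintro ⟨p, hp, i', he, hs⟩
        refine ⟨true :: p, ?_, par empty i', ?_, (ih _).2 hs⟩
        · simp only [front]
          exact Finset.mem_union_right _ (Finset.mem_image.2 ⟨p, hp, rfl⟩)
        · simp [exec, he]

end Interaction


/-- the empty interaction is a neutral element for the scheduling
operators in the trace semantics : for `f ∈ {strict, seq, par}`,
`Accept(f(i,∅)) = Accept(i)` and `Accept(f(∅,i)) = Accept(i)`. -/
theorem empty_neutral_for_scheduling (n : ℕ) (M : Type) (i : Interaction n M) :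
    (∀ ς : List (MAction n M),
       Accept (Interaction.strict i Interaction.empty) ς ↔ Accept i ς) ∧
    (∀ ς : List (MAction n M),
       Accept (Interaction.strict Interaction.empty i) ς ↔ Accept i ς) ∧
    (∀ ς : List (MAction n M),
       Accept (Interaction.seq i Interaction.empty) ς ↔ Accept i ς) ∧
    (∀ ς : List (MAction n M),
       Accept (Interaction.seq Interaction.empty i) ς ↔ Accept i ς) ∧
    (∀ ς : List (MAction n M),
       Accept (Interaction.par i Interaction.empty) ς ↔ Accept i ς) ∧
    (∀ ς : List (MAction n M),
       Accept (Interaction.par Interaction.empty i) ς ↔ Accept i ς) := by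
  exact ⟨fun ς => Interaction.strict_empty_right ς i, fun ς => Interaction.strict_empty_left ς i,
    fun ς => Interaction.seq_empty_right ς i, fun ς => Interaction.seq_empty_left ς i,
    fun ς => Interaction.par_empty_right ς i, fun ς => Interaction.par_empty_left ς i⟩
end
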